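/- With the product ⊙ as above, define a linear functional τ on A by τ(f) = f(e) (the coefficient of the empty word). Then for all words a, b in the free monoid M on {α, β}, τ(a ⊙ b̄) = 1 if a = b and 0 otherwise. -/

import Mathlib

/-- Words on the alphabet `{α, β}`, encoded as lists of booleans. -/
abbrev Wd := List Bool

/-- The reverse-and-swap involution `x ↦ x̄`. -/
def bar (w : Wd) : Wd := (w.map not).reverse

/-- `x ⊙ y = ∑_{x = a·g, y = ḡ·b} a·b` for words `x, y`. -/
noncomputable def wp (x y : Wd) : Wd →₀ ℂ :=
  ∑ k ∈ Finset.range (min x.length y.length + 1),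
    if y.take k = bar (x.drop (x.length - k))
    then Finsupp.single (x.take (x.length - k) ++ y.drop k) (1 : ℂ) else 0

/-- The bilinear extension of `⊙` to the free vector space on words. -/
noncomputable def odot (f g : Wd →₀ ℂ) : Wd →₀ ℂ :=
  f.sum fun x cx => g.sum fun y cy => (cx * cy) • wp x y

@[simp] lemma length_bar (w : Wd) : (bar w).length = w.length := by simp [bar]

lemma bar_involutive : Function.Involutive bar := by
  intro w; simp [bar, List.map_reverse, Function.comp_def]

lemma odot_single_single (x y : Wd) (c d : ℂ) :
    odot (Finsupp.single x c) (Finsupp.single y d) = (c * d) • wp x y := by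
  simp [odot, Finsupp.sum_single_index]

/-- Only the full cancellation `g = x`, `ḡ = y` can produce the empty word. -/
lemma wp_apply_nil (x y : Wd) : wp x y [] = if y = bar x then 1 else 0 := by
  rw [wp, Finsupp.finsetSum_apply, Finset.sum_eq_single x.length]
  · by_cases hy : y = bar x
    · simp [hy, List.drop_eq_nil_of_le]
    · have hdrop : (y.take x.length = bar x) → y.drop x.length ≠ [] := by
        intro h hd
        exact hy (by rw [← List.take_append_drop x.length y, h, hd, List.append_nil])
      split_ifs with h <;> simp_all
  · intro k hk hkx
    have hprefix : x.take (x.length - k) ≠ [] := by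
      simp only [Finset.mem_range, Nat.lt_succ_iff, le_min_iff] at hk
      apply List.ne_nil_of_length_pos
      simp only [List.length_take]; omega
    split_ifs <;> simp [hprefix]
  · intro hx
    have hy : y.length < x.length := by simp at hx; omega
    have htake : y.take x.length ≠ bar x := by
      rw [List.take_of_length_le hy.le]; intro h; simp [h] at hy
    simp [htake]

/-- `τ(a ⊙ b̄) = δ_{a,b}` where `τ` extracts the coefficient of the empty word. -/
theorem stmt7 (a b : Wd) :
    (odot (Finsupp.single a (1 : ℂ)) (Finsupp.single (bar b) (1 : ℂ))) ([] : Wd)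
      = if a = b then 1 else 0 := by
  simp only [odot_single_single, one_mul, one_smul, wp_apply_nil, bar_involutive.injective.eq_iff, eq_comm]
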